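/- The extended inner angle map θ̃ : ℝ_{>0}³ → [0,π]³ is continuous, where θ̃(l) is the triple of inner angles of the Euclidean triangle with side lengths l if l satisfies the strict triangle inequalities, and θ̃_i = π, θ̃_j = θ̃_k = 0 if l_i ≥ l_j + l_k. -/

import Mathlib

/-- The two indices of `Fin 3` other than the given one. -/
def others : Fin 3 → Fin 3 × Fin 3
  | 0 => (1, 2)
  | 1 => (0, 2)
  | 2 => (0, 1)

/-- `l` satisfies the strict triangle inequalities. -/
def IsTriangle (l : Fin 3 → ℝ) : Prop :=
  l 0 < l 1 + l 2 ∧ l 1 < l 0 + l 2 ∧ l 2 < l 0 + l 1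

open Classical in
/-- The extended inner angle at vertex `i` of the (generalized) triangle with side
lengths `l` (`l i` is the side opposite vertex `i`): given by the law of cosines for
genuine triangles, and `π` (resp. `0`) at the vertex whose opposite side is too long
(resp. at the other two vertices) for degenerate ones. -/
noncomputable def extAng (l : Fin 3 → ℝ) (i : Fin 3) : ℝ :=
  let j := (others i).1
  let k := (others i).2
  if IsTriangle l then
    Real.arccos ((l j ^ 2 + l k ^ 2 - l i ^ 2) / (2 * l j * l k))
  else if l j + l k ≤ l i then Real.pi
  else 0

/-!
On positive triples the extended angle is given everywhere by the law of cosines,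
`θ̃_i = arccos ((l_j² + l_k² - l_i²) / (2 l_j l_k))`, because `arccos` is clamped to `π` on
`(-∞, -1]` and to `0` on `[1, ∞)`: if `l_i ≥ l_j + l_k` the cosine ratio is `≤ -1`, and if another
side is too long then `l_i ≤ |l_j - l_k|` and the ratio is `≥ 1`. The right-hand side is a
composition of continuous maps, the denominator being positive.
-/

open Real

/-- The cosine of the angle opposite the side `c` in a triangle with sides `a`, `b`, `c`. -/
noncomputable def cosOfSides (a b c : ℝ) : ℝ :=
  (a ^ 2 + b ^ 2 - c ^ 2) / (2 * a * b)

section cosOfSides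

variable {a b c : ℝ}

lemma cosOfSides_le_neg_one (ha : 0 < a) (hb : 0 < b) (h : a + b ≤ c) :
    cosOfSides a b c ≤ -1 := by
  rw [cosOfSides, div_le_iff₀ (by positivity)]
  nlinarith

lemma one_le_cosOfSides (ha : 0 < a) (hb : 0 < b) (hc : 0 ≤ c) (h : c ≤ |a - b|) :
    1 ≤ cosOfSides a b c := by
  have hsq : c ^ 2 ≤ (a - b) ^ 2 := by
    rw [← sq_abs (a - b)]
    exact pow_le_pow_left₀ hc h 2
  rw [cosOfSides, le_div_iff₀ (by positivity)]
  nlinarith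

lemma arccos_cosOfSides_of_add_le (ha : 0 < a) (hb : 0 < b) (h : a + b ≤ c) :
    arccos (cosOfSides a b c) = π :=
  arccos_of_le_neg_one (cosOfSides_le_neg_one ha hb h)

lemma arccos_cosOfSides_of_le_abs_sub (ha : 0 < a) (hb : 0 < b) (hc : 0 ≤ c)
    (h : c ≤ |a - b|) : arccos (cosOfSides a b c) = 0 :=
  arccos_of_one_le (one_le_cosOfSides ha hb hc h)

end cosOfSides

lemma le_abs_sub_of_not_isTriangle {l : Fin 3 → ℝ} {i : Fin 3} (ht : ¬ IsTriangle l)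
    (hi : ¬ l (others i).1 + l (others i).2 ≤ l i) :
    l i ≤ |l (others i).1 - l (others i).2| := by
  simp only [IsTriangle, not_and_or, not_lt] at ht
  rw [not_le] at hi
  rw [le_abs]
  obtain rfl | rfl | rfl : i = 0 ∨ i = 1 ∨ i = 2 := by omega
  all_goals simp only [others] at hi ⊢
  all_goals rcases ht with h | h | h <;> first
    | (left; linarith) | (right; linarith)

lemma extAng_eq_arccos_cosOfSides {l : Fin 3 → ℝ} (hl : ∀ i, 0 < l i) (i : Fin 3) :
    extAng l i = arccos (cosOfSides (l (others i).1) (l (others i).2) (l i)) := by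
  have hj := hl (others i).1
  have hk := hl (others i).2
  unfold extAng
  dsimp only
  split_ifs with ht hd
  · rfl
  · exact (arccos_cosOfSides_of_add_le hj hk hd).symm
  · exact (arccos_cosOfSides_of_le_abs_sub hj hk (hl i).le
      (le_abs_sub_of_not_isTriangle ht hd)).symm

theorem extAng_continuousOn :
    ContinuousOn (fun l : Fin 3 → ℝ => fun i => extAng l i)
      {l : Fin 3 → ℝ | ∀ i, 0 < l i} := by
  refine continuousOn_pi.2 fun i => ?_
  refine ContinuousOn.congr ?_ fun l hl => extAng_eq_arccos_cosOfSides hl i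
  refine continuous_arccos.comp_continuousOn (ContinuousOn.div (by fun_prop) (by fun_prop) ?_)
  intro l hl
  have := hl (others i).1
  have := hl (others i).2
  positivity
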